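/- Davis–Kahan overlap corollary: Let ρ and σ be density operators with H = σ − ρ and ‖H‖₁ ≤ 2ε. Fix an index i and let u_i, v_i be unit eigenvectors of ρ and σ for their i-th largest eigenvalues. Suppose δ_i := min{λ_i(σ) − λ_{i+1}(σ) − ε, λ_{i−1}(σ) − λ_i(σ) − ε} > 0. Then the fidelity satisfies |⟨u_i, v_i⟩|² ≥ 1 − ε²/δ_i². -/

import Mathlib

/-!
The trace of `σ - ρ` vanishes, so `‖σ - ρ‖₁ ≤ 2ε` bounds every eigenvalue of `σ - ρ`, and hence
its operator norm, by `ε`. Weyl's inequality (a Courant–Fischer dimension count) then gives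
`|λᵢ(σ) - λᵢ(ρ)| ≤ ε`, so `λᵢ(ρ)` lies at distance at least `δ` from every other eigenvalue of
`σ`, while `λᵢ(σ)` is simple. Expanding `u` in an eigenbasis of `σ`, the residual
`‖σu - λᵢ(ρ)u‖ = ‖(σ - ρ)u‖ ≤ ε` bounds the weight of `u` off the `i`-th eigenvector by
`ε² / δ²` (the sin θ theorem), and `|⟪u, v⟫|²` is the remaining weight since `v` spans the
`i`-th eigenline of `σ`.
-/

open Matrix ComplexOrder

/-- The trace norm `‖A‖₁ = Tr √(AᴴA)` of a complex matrix. -/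
noncomputable def traceNorm {d : ℕ} (A : Matrix (Fin d) (Fin d) ℂ) : ℝ :=
  ((Matrix.posSemidef_conjTranspose_mul_self A).1.eigenvectorUnitary.1 *
    diagonal (((↑) : ℝ → ℂ) ∘ (√·) ∘ (Matrix.posSemidef_conjTranspose_mul_self A).1.eigenvalues) *
    (star (Matrix.posSemidef_conjTranspose_mul_self A).1.eigenvectorUnitary :
      Matrix (Fin d) (Fin d) ℂ)).trace.re

open scoped InnerProductSpace

namespace OrthonormalBasis

variable {𝕜 E ι : Type*} [RCLike 𝕜] [NormedAddCommGroup E] [InnerProductSpace 𝕜 E] [Fintype ι]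

lemma inner_eq_zero_of_mem_span_image (b : OrthonormalBasis ι 𝕜 E) {s : Set ι}
    {x : E} (hx : x ∈ Submodule.span 𝕜 (b '' s)) {j : ι} (hj : j ∉ s) : ⟪b j, x⟫_𝕜 = 0 := by
  have hle : Submodule.span 𝕜 (b '' s) ≤ (𝕜 ∙ b j)ᗮ := by
    refine Submodule.span_le.2 ?_
    rintro _ ⟨k, hk, rfl⟩
    exact Submodule.mem_orthogonal_singleton_iff_inner_right.2
      (b.orthonormal.2 (ne_of_mem_of_not_mem hk hj).symm)
  exact Submodule.mem_orthogonal_singleton_iff_inner_right.1 (hle hx)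

lemma finrank_span_image (b : OrthonormalBasis ι 𝕜 E) (s : Finset ι) :
    Module.finrank 𝕜 (Submodule.span 𝕜 (b '' s)) = s.card := by
  rw [Set.image_eq_range, finrank_span_eq_card (b := fun j : (s : Set ι) ↦ b j)
    (b.orthonormal.linearIndependent.comp _ Subtype.val_injective)]
  simp

end OrthonormalBasis

namespace LinearMap.IsSymmetric

variable {𝕜 E ι : Type*} [RCLike 𝕜] [NormedAddCommGroup E] [InnerProductSpace 𝕜 E]
  {T : E →ₗ[𝕜] E}

lemma inner_apply_of_eigenvector (hT : T.IsSymmetric) {c : ℝ} {v : E}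
    (hv : T v = (c : 𝕜) • v) (x : E) : ⟪v, T x⟫_𝕜 = c * ⟪v, x⟫_𝕜 := by
  rw [← hT, hv, inner_smul_left, RCLike.conj_ofReal]

lemma inner_eq_zero_of_eigenvalue_ne (hT : T.IsSymmetric) {c c' : ℝ}
    {v w : E} (hv : T v = (c : 𝕜) • v) (hw : T w = (c' : 𝕜) • w) (hcc' : c' ≠ c) :
    ⟪w, v⟫_𝕜 = 0 := by
  have h := hT.inner_apply_of_eigenvector hw v
  rw [hv, inner_smul_right] at h
  have : ((c' : 𝕜) - c) * ⟪w, v⟫_𝕜 = 0 := by rw [sub_mul, ← h, sub_self]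
  exact (mul_eq_zero.1 this).resolve_left (by exact_mod_cast sub_ne_zero.2 hcc')

section Eigenbasis

variable [Fintype ι] {b : OrthonormalBasis ι 𝕜 E} {μ : ι → ℝ}

lemma norm_apply_sub_smul_sq (hT : T.IsSymmetric) (hb : ∀ j, T (b j) = (μ j : 𝕜) • b j)
    (x : E) (t : ℝ) :
    ‖T x - (t : 𝕜) • x‖ ^ 2 = ∑ j, (μ j - t) ^ 2 * ‖⟪b j, x⟫_𝕜‖ ^ 2 := by
  rw [← b.sum_sq_norm_inner_right (T x - (t : 𝕜) • x)]
  congr! 1 with j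
  rw [inner_sub_right, hT.inner_apply_of_eigenvector (hb j), inner_smul_right, ← sub_mul,
    norm_mul, mul_pow, ← RCLike.ofReal_sub, RCLike.norm_ofReal, sq_abs]

lemma norm_apply_le_of_forall_abs_le (hT : T.IsSymmetric) (hb : ∀ j, T (b j) = (μ j : 𝕜) • b j)
    {ε : ℝ} (hε : 0 ≤ ε) (hμ : ∀ j, |μ j| ≤ ε) (x : E) : ‖T x‖ ≤ ε * ‖x‖ := by
  have hsq : ‖T x‖ ^ 2 ≤ (ε * ‖x‖) ^ 2 := calc
    ‖T x‖ ^ 2 = ∑ j, (μ j - 0) ^ 2 * ‖⟪b j, x⟫_𝕜‖ ^ 2 := by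
      rw [← norm_apply_sub_smul_sq hT hb, RCLike.ofReal_zero, zero_smul, sub_zero]
    _ ≤ ∑ j, ε ^ 2 * ‖⟪b j, x⟫_𝕜‖ ^ 2 := by
      refine Finset.sum_le_sum fun j _ ↦ mul_le_mul_of_nonneg_right ?_ (sq_nonneg _)
      exact sq_le_sq.2 (by rw [sub_zero, abs_of_nonneg hε]; exact hμ j)
    _ = (ε * ‖x‖) ^ 2 := by rw [← Finset.mul_sum, b.sum_sq_norm_inner_right, mul_pow]
  exact (pow_le_pow_iff_left₀ (norm_nonneg _) (by positivity) two_ne_zero).1 hsq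

lemma re_inner_apply_self (hT : T.IsSymmetric) (hb : ∀ j, T (b j) = (μ j : 𝕜) • b j) (x : E) :
    RCLike.re ⟪x, T x⟫_𝕜 = ∑ j, μ j * ‖⟪b j, x⟫_𝕜‖ ^ 2 := by
  rw [← b.sum_inner_mul_inner x (T x), map_sum]
  congr! 1 with j
  rw [hT.inner_apply_of_eigenvector (hb j), ← inner_conj_symm x (b j), mul_left_comm,
    RCLike.conj_mul, ← RCLike.ofReal_pow, ← RCLike.ofReal_mul, RCLike.ofReal_re]

lemma mul_norm_sq_le_re_inner_apply_self (hT : T.IsSymmetric)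
    (hb : ∀ j, T (b j) = (μ j : 𝕜) • b j) {s : Set ι} {c : ℝ} (hc : ∀ j ∈ s, c ≤ μ j) {x : E}
    (hx : x ∈ Submodule.span 𝕜 (b '' s)) : c * ‖x‖ ^ 2 ≤ RCLike.re ⟪x, T x⟫_𝕜 := by
  rw [re_inner_apply_self hT hb, ← b.sum_sq_norm_inner_right, Finset.mul_sum]
  refine Finset.sum_le_sum fun j _ ↦ ?_
  by_cases hj : j ∈ s
  · exact mul_le_mul_of_nonneg_right (hc j hj) (sq_nonneg _)
  · simp [b.inner_eq_zero_of_mem_span_image hx hj]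

lemma re_inner_apply_self_le_mul_norm_sq (hT : T.IsSymmetric)
    (hb : ∀ j, T (b j) = (μ j : 𝕜) • b j) {s : Set ι} {c : ℝ} (hc : ∀ j ∈ s, μ j ≤ c) {x : E}
    (hx : x ∈ Submodule.span 𝕜 (b '' s)) : RCLike.re ⟪x, T x⟫_𝕜 ≤ c * ‖x‖ ^ 2 := by
  rw [re_inner_apply_self hT hb, ← b.sum_sq_norm_inner_right, Finset.mul_sum]
  refine Finset.sum_le_sum fun j _ ↦ ?_
  by_cases hj : j ∈ s
  · exact mul_le_mul_of_nonneg_right (hc j hj) (sq_nonneg _)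
  · simp [b.inner_eq_zero_of_mem_span_image hx hj]

lemma sq_norm_sub_sq_div_sq_le_norm_inner_sq (hT : T.IsSymmetric)
    (hb : ∀ j, T (b j) = (μ j : 𝕜) • b j) {x : E} {t ε δ : ℝ} (hres : ‖T x - (t : 𝕜) • x‖ ≤ ε)
    {i : ι} (hgap : ∀ j ≠ i, δ ≤ |μ j - t|) (hδ : 0 < δ) :
    ‖x‖ ^ 2 - ε ^ 2 / δ ^ 2 ≤ ‖⟪b i, x⟫_𝕜‖ ^ 2 := by
  classical
  have hrest : δ ^ 2 * ∑ j ∈ Finset.univ.erase i, ‖⟪b j, x⟫_𝕜‖ ^ 2 ≤ ε ^ 2 := calc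
    _ = ∑ j ∈ Finset.univ.erase i, δ ^ 2 * ‖⟪b j, x⟫_𝕜‖ ^ 2 := Finset.mul_sum _ _ _
    _ ≤ ∑ j ∈ Finset.univ.erase i, (μ j - t) ^ 2 * ‖⟪b j, x⟫_𝕜‖ ^ 2 := by
      refine Finset.sum_le_sum fun j hj ↦ mul_le_mul_of_nonneg_right ?_ (sq_nonneg _)
      rw [← sq_abs (μ j - t)]
      exact pow_le_pow_left₀ hδ.le (hgap j (Finset.ne_of_mem_erase hj)) 2
    _ ≤ ∑ j, (μ j - t) ^ 2 * ‖⟪b j, x⟫_𝕜‖ ^ 2 :=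
      Finset.sum_le_sum_of_subset_of_nonneg (Finset.erase_subset _ _) fun _ _ _ ↦ by positivity
    _ = ‖T x - (t : 𝕜) • x‖ ^ 2 := (norm_apply_sub_smul_sq hT hb x t).symm
    _ ≤ ε ^ 2 := pow_le_pow_left₀ (norm_nonneg _) hres 2
  rw [← b.sum_sq_norm_inner_right x, ← Finset.add_sum_erase _ _ (Finset.mem_univ i)]
  have := (le_div_iff₀' (by positivity)).2 hrest
  linarith

lemma norm_inner_eq_of_eigenvalue_ne (hT : T.IsSymmetric) (hb : ∀ j, T (b j) = (μ j : 𝕜) • b j)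
    {i : ι} (hμ : ∀ j ≠ i, μ j ≠ μ i) {v : E} (hv : T v = (μ i : 𝕜) • v) (u : E) :
    ‖⟪u, v⟫_𝕜‖ = ‖⟪u, b i⟫_𝕜‖ * ‖v‖ := by
  classical
  have hzero : ∀ j ≠ i, ⟪b j, v⟫_𝕜 = 0 := fun j hj ↦
    hT.inner_eq_zero_of_eigenvalue_ne hv (hb j) (hμ j hj)
  have hnorm : ‖⟪b i, v⟫_𝕜‖ = ‖v‖ := by
    rw [← pow_left_inj₀ (norm_nonneg _) (norm_nonneg _) two_ne_zero,
      ← b.sum_sq_norm_inner_right v, Finset.sum_eq_single i (fun j _ hj ↦ by simp [hzero j hj])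
        (by simp)]
  rw [← b.sum_inner_mul_inner u v, Finset.sum_eq_single i (fun j _ hj ↦ by simp [hzero j hj])
    (by simp), norm_mul, hnorm]

end Eigenbasis

variable {n : ℕ}

lemma eigenvalue_le_add_of_norm_sub_le {S T : E →ₗ[𝕜] E} (hS : S.IsSymmetric)
    (hT : T.IsSymmetric) {f g : OrthonormalBasis (Fin n) 𝕜 E} {a b : Fin n → ℝ}
    (hf : ∀ j, S (f j) = (a j : 𝕜) • f j) (hg : ∀ j, T (g j) = (b j : 𝕜) • g j)
    (ha : Antitone a) (hb : Antitone b) {ε : ℝ} (hST : ∀ x, ‖S x - T x‖ ≤ ε * ‖x‖) (i : Fin n) :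
    a i ≤ b i + ε := by
  have : FiniteDimensional 𝕜 E := f.toBasis.finiteDimensional_of_finite
  obtain ⟨x, hxf, hxg, hx0⟩ : ∃ x ∈ Submodule.span 𝕜 (f '' ↑(Finset.Iic i)),
      x ∈ Submodule.span 𝕜 (g '' ↑(Finset.Ici i)) ∧ x ≠ 0 := by
    by_contra! h
    have hdim := Submodule.finrank_add_finrank_le_of_disjoint (Submodule.disjoint_def.2 h)
    rw [f.finrank_span_image, g.finrank_span_image, Fin.card_Iic, Fin.card_Ici,
      Module.finrank_eq_card_basis f.toBasis, Fintype.card_fin] at hdim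
    omega
  have hSx : a i * ‖x‖ ^ 2 ≤ RCLike.re ⟪x, S x⟫_𝕜 :=
    hS.mul_norm_sq_le_re_inner_apply_self hf (fun j hj ↦ ha (Finset.mem_Iic.1 hj)) hxf
  have hTx : RCLike.re ⟪x, T x⟫_𝕜 ≤ b i * ‖x‖ ^ 2 :=
    hT.re_inner_apply_self_le_mul_norm_sq hg (fun j hj ↦ hb (Finset.mem_Ici.1 hj)) hxg
  have hdiff : RCLike.re ⟪x, S x⟫_𝕜 - RCLike.re ⟪x, T x⟫_𝕜 ≤ ε * ‖x‖ ^ 2 := calc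
    _ = RCLike.re ⟪x, S x - T x⟫_𝕜 := by rw [inner_sub_right, map_sub]
    _ ≤ ‖x‖ * ‖S x - T x‖ := (RCLike.re_le_norm _).trans (norm_inner_le_norm _ _)
    _ ≤ ‖x‖ * (ε * ‖x‖) := by gcongr; exact hST x
    _ = ε * ‖x‖ ^ 2 := by ring
  have hx : 0 < ‖x‖ ^ 2 := by positivity
  nlinarith

lemma abs_sub_eigenvalue_le_of_norm_sub_le {S T : E →ₗ[𝕜] E} (hS : S.IsSymmetric)
    (hT : T.IsSymmetric) {f g : OrthonormalBasis (Fin n) 𝕜 E} {a b : Fin n → ℝ}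
    (hf : ∀ j, S (f j) = (a j : 𝕜) • f j) (hg : ∀ j, T (g j) = (b j : 𝕜) • g j)
    (ha : Antitone a) (hb : Antitone b) {ε : ℝ} (hST : ∀ x, ‖S x - T x‖ ≤ ε * ‖x‖) (i : Fin n) :
    |a i - b i| ≤ ε := by
  have hTS : ∀ x, ‖T x - S x‖ ≤ ε * ‖x‖ := fun x ↦ norm_sub_rev (T x) (S x) ▸ hST x
  have hab := hS.eigenvalue_le_add_of_norm_sub_le hT hf hg ha hb hST i
  have hba := hT.eigenvalue_le_add_of_norm_sub_le hS hg hf hb ha hTS i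
  exact abs_sub_le_iff.2 ⟨by linarith, by linarith⟩

end LinearMap.IsSymmetric

lemma abs_le_of_sum_eq_zero_of_sum_abs_le {ι : Type*} {s : Finset ι} {e : ι → ℝ} {ε : ℝ}
    (hsum : ∑ k ∈ s, e k = 0) (habs : ∑ k ∈ s, |e k| ≤ 2 * ε) {j : ι} (hj : j ∈ s) :
    |e j| ≤ ε := by
  classical
  rw [← Finset.add_sum_erase s _ hj] at hsum habs
  have : |e j| ≤ ∑ k ∈ s.erase j, |e k| := by
    rw [show e j = -∑ k ∈ s.erase j, e k by linarith, abs_neg]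
    exact Finset.abs_sum_le_sum_abs _ _
  linarith

lemma le_abs_sub_of_antitone {d : ℕ} {a : Fin d → ℝ} (ha : Antitone a) {i : Fin d}
    (hi1 : (i : ℕ) + 1 < d) {g : ℝ} (hnext : g ≤ a i - a ⟨(i : ℕ) + 1, hi1⟩)
    (hprev : g ≤ a ⟨(i : ℕ) - 1, lt_of_le_of_lt (Nat.sub_le _ _) i.isLt⟩ - a i) {j : Fin d}
    (hj : j ≠ i) : g ≤ |a j - a i| := by
  rcases hj.lt_or_gt with hji | hij
  · have : a ⟨(i : ℕ) - 1, lt_of_le_of_lt (Nat.sub_le _ _) i.isLt⟩ ≤ a j :=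
      ha (Fin.le_def.2 (by simp; omega))
    exact le_abs.2 (Or.inl (by linarith))
  · have : a j ≤ a ⟨(i : ℕ) + 1, hi1⟩ := ha (Fin.le_def.2 (by simp; omega))
    exact le_abs.2 (Or.inr (by linarith))

namespace Matrix

variable {𝕜 n : Type*} [RCLike 𝕜] [Fintype n] [DecidableEq n] {A : Matrix n n 𝕜}

lemma toEuclideanLin_eq_smul_of_mulVec_eq_smul {x : EuclideanSpace 𝕜 n} {c : 𝕜}
    (h : A *ᵥ WithLp.equiv 2 (n → 𝕜) x = c • WithLp.equiv 2 (n → 𝕜) x) :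
    toEuclideanLin A x = c • x :=
  (WithLp.equiv 2 (n → 𝕜)).injective h

namespace IsHermitian

lemma toEuclideanLin_eigenvectorBasis (hA : A.IsHermitian) (j : n) :
    toEuclideanLin A (hA.eigenvectorBasis j) =
      (hA.eigenvalues j : 𝕜) • hA.eigenvectorBasis j := by
  refine toEuclideanLin_eq_smul_of_mulVec_eq_smul ?_
  rw [WithLp.equiv_apply, hA.mulVec_eigenvectorBasis j, RCLike.real_smul_eq_coe_smul (K := 𝕜)]

lemma exists_orthonormalBasis_of_eq_eigenvalues_comp (hA : A.IsHermitian) {a : n → ℝ}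
    (ha : ∃ e : Equiv.Perm n, a = hA.eigenvalues ∘ e) :
    ∃ f : OrthonormalBasis n 𝕜 (EuclideanSpace 𝕜 n),
      ∀ j, toEuclideanLin A (f j) = (a j : 𝕜) • f j := by
  obtain ⟨e, rfl⟩ := ha
  refine ⟨hA.eigenvectorBasis.reindex e.symm, fun j ↦ ?_⟩
  rw [OrthonormalBasis.reindex_apply, Equiv.symm_symm]
  exact hA.toEuclideanLin_eigenvectorBasis (e j)

lemma norm_toEuclideanLin_le (hA : A.IsHermitian) {ε : ℝ} (hε : 0 ≤ ε)
    (hbound : ∀ j, |hA.eigenvalues j| ≤ ε) (x : EuclideanSpace 𝕜 n) :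
    ‖toEuclideanLin A x‖ ≤ ε * ‖x‖ :=
  (isSymmetric_toEuclideanLin_iff.2 hA).norm_apply_le_of_forall_abs_le
    hA.toEuclideanLin_eigenvectorBasis hε hbound x

lemma trace_cfc (hA : A.IsHermitian) (f : ℝ → ℝ) :
    (hA.cfc f).trace = ∑ j, (f (hA.eigenvalues j) : 𝕜) := by
  rw [IsHermitian.cfc, Unitary.conjStarAlgAut_apply, trace_mul_cycle,
    Unitary.coe_star_mul_self, one_mul, trace_diagonal]
  rfl

end IsHermitian

end Matrix

lemma traceNorm_eq_sum_abs_eigenvalues {d : ℕ} {A : Matrix (Fin d) (Fin d) ℂ}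
    (hA : A.IsHermitian) : traceNorm A = ∑ j, |hA.eigenvalues j| := by
  have hAA := (posSemidef_conjTranspose_mul_self A).1
  have hsqrt : hAA.cfc Real.sqrt = hA.cfc abs := by
    rw [← hAA.cfc_eq, ← hA.cfc_eq, hA.eq, ← sq, ← cfc_comp_pow Real.sqrt 2 A]
    exact congrArg (cfc · A) (funext Real.sqrt_sq_eq_abs)
  change (hAA.cfc Real.sqrt).trace.re = _
  rw [hsqrt, hA.trace_cfc, Complex.re_sum]
  simp

lemma abs_eigenvalues_le_of_traceNorm_le {d : ℕ} {H : Matrix (Fin d) (Fin d) ℂ}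
    (hH : H.IsHermitian) (htr : H.trace = 0) {ε : ℝ} (hnorm : traceNorm H ≤ 2 * ε) (j : Fin d) :
    |hH.eigenvalues j| ≤ ε := by
  have hsum := hH.trace_eq_sum_eigenvalues
  rw [htr, ← RCLike.ofReal_sum, eq_comm, RCLike.ofReal_eq_zero] at hsum
  rw [traceNorm_eq_sum_abs_eigenvalues hH] at hnorm
  exact abs_le_of_sum_eq_zero_of_sum_abs_le hsum hnorm (Finset.mem_univ j)

theorem davis_kahan_overlap_general {d : ℕ}
    (ρ σ : Matrix (Fin d) (Fin d) ℂ) (ε : ℝ) (hε : 0 ≤ ε)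
    (hρ : ρ.PosSemidef) (hσ : σ.PosSemidef)
    (hρtr : ρ.trace = 1) (hσtr : σ.trace = 1)
    (hH : traceNorm (σ - ρ) ≤ 2 * ε)
    (eρ eσ : Fin d → ℝ)
    (hρanti : Antitone eρ) (hσanti : Antitone eσ)
    (hρeig : ∃ e : Equiv.Perm (Fin d), eρ = hρ.1.eigenvalues ∘ e)
    (hσeig : ∃ e : Equiv.Perm (Fin d), eσ = hσ.1.eigenvalues ∘ e)
    (i : Fin d) (hi1 : (i : ℕ) + 1 < d)
    (u v : EuclideanSpace ℂ (Fin d)) (hu : ‖u‖ = 1) (hv : ‖v‖ = 1)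
    (huEig : ρ.mulVec ((WithLp.equiv 2 (Fin d → ℂ)) u) =
      (eρ i : ℂ) • (WithLp.equiv 2 (Fin d → ℂ)) u)
    (hvEig : σ.mulVec ((WithLp.equiv 2 (Fin d → ℂ)) v) =
      (eσ i : ℂ) • (WithLp.equiv 2 (Fin d → ℂ)) v)
    (δ : ℝ)
    (hδdef : δ = min (eσ i - eσ ⟨(i : ℕ) + 1, hi1⟩ - ε)
      (eσ ⟨(i : ℕ) - 1, lt_of_le_of_lt (Nat.sub_le _ _) i.isLt⟩ - eσ i - ε))
    (hδ : 0 < δ) :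
    1 - ε ^ 2 / δ ^ 2 ≤ ‖inner (𝕜 := ℂ) u v‖ ^ 2 := by
  set S := toEuclideanLin σ
  set T := toEuclideanLin ρ
  have hS : S.IsSymmetric := isSymmetric_toEuclideanLin_iff.2 hσ.1
  have hT : T.IsSymmetric := isSymmetric_toEuclideanLin_iff.2 hρ.1
  obtain ⟨f, hf⟩ := hσ.1.exists_orthonormalBasis_of_eq_eigenvalues_comp hσeig
  obtain ⟨g, hg⟩ := hρ.1.exists_orthonormalBasis_of_eq_eigenvalues_comp hρeig
  have hST : ∀ x, ‖S x - T x‖ ≤ ε * ‖x‖ := fun x ↦ by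
    rw [← LinearMap.sub_apply, ← map_sub]
    exact (hσ.1.sub hρ.1).norm_toEuclideanLin_le hε (abs_eigenvalues_le_of_traceNorm_le _
      (by rw [trace_sub, hρtr, hσtr, sub_self]) hH) x
  have hweyl := hS.abs_sub_eigenvalue_le_of_norm_sub_le hT hf hg hσanti hρanti hST i
  obtain ⟨hnext, hprev⟩ := le_min_iff.1 hδdef.le
  have hgap : ∀ j ≠ i, δ + ε ≤ |eσ j - eσ i| := fun j hj ↦
    le_abs_sub_of_antitone hσanti hi1 (by linarith) (by linarith) hj
  have hres : ‖S u - (eρ i : ℂ) • u‖ ≤ ε := by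
    simpa [T, toEuclideanLin_eq_smul_of_mulVec_eq_smul huEig, hu] using hST u
  have hsimple : ∀ j ≠ i, eσ j ≠ eσ i := fun j hj h ↦
    (hgap j hj).not_gt (by rw [h, sub_self, abs_zero]; linarith)
  have hoverlap := hS.sq_norm_sub_sq_div_sq_le_norm_inner_sq hf hres (i := i) (fun j hj ↦ by
    linarith [hgap j hj, abs_sub_le (eσ j) (eρ i) (eσ i), abs_sub_comm (eρ i) (eσ i)]) hδ
  rwa [hS.norm_inner_eq_of_eigenvalue_ne hf hsimple
    (toEuclideanLin_eq_smul_of_mulVec_eq_smul hvEig), hv, mul_one, norm_inner_symm, ← one_pow 2,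
    ← hu]

/-- Davis–Kahan overlap corollary: Let `ρ`, `σ` be density operators with
`H = σ − ρ`, `‖H‖₁ ≤ 2ε`.  Let `u`, `v` be unit eigenvectors of `ρ` and `σ` for their
`i`-th largest eigenvalues (sorted enumerations `eρ`, `eσ`).  If
`δ = min{λ_i(σ) − λ_{i+1}(σ) − ε, λ_{i−1}(σ) − λ_i(σ) − ε} > 0`, then
`|⟨u, v⟩|² ≥ 1 − ε²/δ²`. -/
theorem davis_kahan_overlap {d : ℕ}
    (ρ σ : Matrix (Fin d) (Fin d) ℂ) (ε : ℝ) (hε : 0 ≤ ε)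
    (hρ : ρ.PosSemidef) (hσ : σ.PosSemidef)
    (hρtr : ρ.trace = 1) (hσtr : σ.trace = 1)
    (hH : traceNorm (σ - ρ) ≤ 2 * ε)
    (eρ eσ : Fin d → ℝ)
    (hρanti : Antitone eρ) (hσanti : Antitone eσ)
    (hρeig : ∃ e : Equiv.Perm (Fin d), eρ = hρ.1.eigenvalues ∘ e)
    (hσeig : ∃ e : Equiv.Perm (Fin d), eσ = hσ.1.eigenvalues ∘ e)
    (i : Fin d) (hi0 : 0 < (i : ℕ)) (hi1 : (i : ℕ) + 1 < d)
    (u v : EuclideanSpace ℂ (Fin d)) (hu : ‖u‖ = 1) (hv : ‖v‖ = 1)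
    (huEig : ρ.mulVec ((WithLp.equiv 2 (Fin d → ℂ)) u) =
      (eρ i : ℂ) • (WithLp.equiv 2 (Fin d → ℂ)) u)
    (hvEig : σ.mulVec ((WithLp.equiv 2 (Fin d → ℂ)) v) =
      (eσ i : ℂ) • (WithLp.equiv 2 (Fin d → ℂ)) v)
    (δ : ℝ)
    (hδdef : δ = min (eσ i - eσ ⟨(i : ℕ) + 1, hi1⟩ - ε)
      (eσ ⟨(i : ℕ) - 1, lt_of_le_of_lt (Nat.sub_le _ _) i.isLt⟩ - eσ i - ε))
    (hδ : 0 < δ) :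
    1 - ε ^ 2 / δ ^ 2 ≤ ‖inner (𝕜 := ℂ) u v‖ ^ 2 :=
  davis_kahan_overlap_general ρ σ ε hε hρ hσ hρtr hσtr hH eρ eσ hρanti hσanti hρeig hσeig i hi1 u v
    hu hv huEig hvEig δ hδdef hδ
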